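/- arXiv:2209.00543 — 3 statements merged into one kernel-verified Lean document; each statement's English description precedes it below -/
import Mathlib

section
/- Let (Ω, 𝒜, μ) be a probability space, let Q, G, A be measurable sets with A ⊆ Q, and let B 1, …, B N be measurable sets (N ≥ 1). For 0 ≤ i ≤ N write K i := B 1 ∩ ⋯ ∩ B i (with K 0 := Ω). Assume all of the following are strictly positive: μ(Q ∩ G ∩ K i) and μ(A ∩ G ∩ K i) for 0 ≤ i ≤ N, and μ(Q ∩ G ∩ B i) and μ(A ∩ G ∩ B i) for 1 ≤ i ≤ N. Assume: (i) for every 1 ≤ i ≤ N, μ(A ∩ G ∩ B i)/μ(Q ∩ G ∩ B i) > μ(A ∩ G)/μ(Q ∩ G); and (ii) for every 2 ≤ i ≤ N, μ(K i ∩ A ∩ G) · μ(A ∩ G) / (μ(K (i−1) ∩ A ∩ G) · μ(B i ∩ A ∩ G)) ≥ μ(K i ∩ Q ∩ G) · μ(Q ∩ G) / (μ(K (i−1) ∩ Q ∩ G) · μ(B i ∩ Q ∩ G)). Then for every 1 ≤ i ≤ N, μ(A ∩ G ∩ K i)/μ(Q ∩ G ∩ K i) > μ(A ∩ G ∩ K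 (i−1))/μ(Q ∩ G ∩ K (i−1)). -/
open MeasureTheory

/-- **Multiple lines of evidence strictly increase conditional probability.**
`A` is the event that claim `(q, v*)` is produced, `Q ⊇ A` that question `q` is produced,
`G` that the background claim set `β` is produced, and `B i` the event that the `i`-th
evidence path is produced; `K i = B 1 ∩ ⋯ ∩ B i` (with `K 0 = Ω`). If each `B i` is a
line of evidence (i) and the evidence paths do not thwart one another (ii), then each
additional evidence path strictly increases the conditional probability of the answer. -/
theorem evidence_paths_increase_probability
    {Ω : Type*} [MeasurableSpace Ω] (μ : Measure Ω) [IsProbabilityMeasure μ]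
    (Q G A : Set Ω) (B : ℕ → Set Ω) (N : ℕ) (hN : 1 ≤ N)
    (hQ : MeasurableSet Q) (hG : MeasurableSet G) (hA : MeasurableSet A)
    (hB : ∀ i, MeasurableSet (B i))
    (hAQ : A ⊆ Q)
    (K : ℕ → Set Ω)
    (hK : ∀ i, K i = ⋂ j ∈ Finset.Icc 1 i, B j)
    (hposQK : ∀ i ≤ N, 0 < (μ (Q ∩ G ∩ K i)).toReal)
    (hposAK : ∀ i ≤ N, 0 < (μ (A ∩ G ∩ K i)).toReal)
    (hposQB : ∀ i, 1 ≤ i → i ≤ N → 0 < (μ (Q ∩ G ∩ B i)).toReal)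
    (hposAB : ∀ i, 1 ≤ i → i ≤ N → 0 < (μ (A ∩ G ∩ B i)).toReal)
    (hEvidence : ∀ i, 1 ≤ i → i ≤ N →
      (μ (A ∩ G ∩ B i)).toReal / (μ (Q ∩ G ∩ B i)).toReal >
        (μ (A ∩ G)).toReal / (μ (Q ∩ G)).toReal)
    (hNoThwart : ∀ i, 2 ≤ i → i ≤ N →
      (μ (K i ∩ A ∩ G)).toReal * (μ (A ∩ G)).toReal /
          ((μ (K (i - 1) ∩ A ∩ G)).toReal * (μ (B i ∩ A ∩ G)).toReal) ≥
        (μ (K i ∩ Q ∩ G)).toReal * (μ (Q ∩ G)).toReal /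
          ((μ (K (i - 1) ∩ Q ∩ G)).toReal * (μ (B i ∩ Q ∩ G)).toReal)) :
    ∀ i, 1 ≤ i → i ≤ N →
      (μ (A ∩ G ∩ K i)).toReal / (μ (Q ∩ G ∩ K i)).toReal >
        (μ (A ∩ G ∩ K (i - 1))).toReal / (μ (Q ∩ G ∩ K (i - 1))).toReal := by
  intro i hi1 hiN
  have hK0 : K 0 = Set.univ := by simp [hK]
  have hposA : 0 < (μ (A ∩ G)).toReal := by
    have := hposAK 0 (by omega); simpa [hK0] using this
  have hposQ : 0 < (μ (Q ∩ G)).toReal := by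
    have := hposQK 0 (by omega); simpa [hK0] using this
  rcases eq_or_lt_of_le hi1 with h1 | h2
  · subst h1
    have hK1 : K 1 = B 1 := by simp [hK]
    simpa [hK1, hK0] using hEvidence 1 le_rfl hiN
  · have hi2 : 2 ≤ i := h2
    have e1 : K i ∩ A ∩ G = A ∩ G ∩ K i := by
      rw [Set.inter_assoc, Set.inter_comm]
    have e2 : K i ∩ Q ∩ G = Q ∩ G ∩ K i := by
      rw [Set.inter_assoc, Set.inter_comm]
    have e3 : K (i - 1) ∩ A ∩ G = A ∩ G ∩ K (i - 1) := by
      rw [Set.inter_assoc, Set.inter_comm]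
    have e4 : K (i - 1) ∩ Q ∩ G = Q ∩ G ∩ K (i - 1) := by
      rw [Set.inter_assoc, Set.inter_comm]
    have e5 : B i ∩ A ∩ G = A ∩ G ∩ B i := by
      rw [Set.inter_assoc, Set.inter_comm]
    have e6 : B i ∩ Q ∩ G = Q ∩ G ∩ B i := by
      rw [Set.inter_assoc, Set.inter_comm]
    have hNT := hNoThwart i hi2 hiN
    rw [e1, e2, e3, e4, e5, e6] at hNT
    have hev := hEvidence i hi1 hiN
    have pai := hposAK i hiN
    have pqi := hposQK i hiN
    have pai' := hposAK (i - 1) (by omega)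
    have pqi' := hposQK (i - 1) (by omega)
    have pab := hposAB i hi1 hiN
    have pqb := hposQB i hi1 hiN
    rw [gt_iff_lt, div_lt_div_iff₀ pqi' pqi]
    rw [ge_iff_le, div_le_div_iff₀ (by positivity) (by positivity)] at hNT
    rw [gt_iff_lt, div_lt_div_iff₀ hposQ pqb] at hev
    nlinarith [hNT, mul_lt_mul_of_pos_left hev (mul_pos pqi pai'),
      mul_pos hposA pqb, mul_pos pqi pai']
end

section
/- Let V₁ and V₂ be nonempty finite types, v* ∈ V₁, N ≥ 1, and D a divergence on S(V₁) that is jointly convex. Fix Ψ : V₂ → S(V₁) and weights p 0, …, p N ∈ S(V₂), and set F i := ∑ v ∈ V₂, p i (v) • Ψ(v) ∈ S(V₁). Assume F i (v*) > F (i−1) (v*) for all 1 ≤ i ≤ N. Then there exists ε₀ > 0 such that for every family R assigning to each 0 ≤ i ≤ N and v ∈ V₂ a distribution R i v ∈ S(V₁), if ∑ v ∈ V₂, p i (v) · D (Ψ(v)) (R i v) ≤ ε₀ for every 0 ≤ i ≤ N, then the mixtures G i := ∑ v ∈ V₂, p i (v) • R i v satisfy G i (v*) > G (i−1) (v*) for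 all 1 ≤ i ≤ N. -/
open scoped BigOperators

/-- A divergence on the probability simplex `stdSimplex ℝ W`: continuous (in the
subspace topology on the simplex), nonnegative, and vanishing exactly on the diagonal. -/
def IsDivergence {W : Type*} [Fintype W] (D : (W → ℝ) → (W → ℝ) → ℝ) : Prop :=
  ContinuousOn (fun pq : (W → ℝ) × (W → ℝ) => D pq.1 pq.2)
      (stdSimplex ℝ W ×ˢ stdSimplex ℝ W) ∧
    (∀ p ∈ stdSimplex ℝ W, ∀ q ∈ stdSimplex ℝ W, 0 ≤ D p q) ∧
    (∀ p ∈ stdSimplex ℝ W, ∀ q ∈ stdSimplex ℝ W, (D p q = 0 ↔ p = q))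

/-- `D` is jointly convex on the simplex. -/
def JointlyConvexDiv {W : Type*} [Fintype W] (D : (W → ℝ) → (W → ℝ) → ℝ) : Prop :=
  ∀ p₁ ∈ stdSimplex ℝ W, ∀ p₂ ∈ stdSimplex ℝ W, ∀ q₁ ∈ stdSimplex ℝ W,
    ∀ q₂ ∈ stdSimplex ℝ W, ∀ t ∈ Set.Icc (0 : ℝ) 1,
      D (t • p₁ + (1 - t) • p₂) (t • q₁ + (1 - t) • q₂) ≤
        t * D p₁ q₁ + (1 - t) * D p₂ q₂

/-! The embedded predictions `F i` increase at `vstar` by a uniform gap `δ > 0`. By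
compactness of the simplex, a divergence that is small forces the two distributions to be
close at `vstar`; by joint convexity, `D (F i) (G i)` is at most the embed-calibration sum.
So for small `ε₀` each `G i vstar` lies within `δ / 2` of `F i vstar`, and the increase
survives. -/

open Filter Topology in
theorem Finset.exists_pos_forall_lt {ι : Type*} (s : Finset ι) {g : ι → ℝ}
    (hg : ∀ i ∈ s, 0 < g i) : ∃ δ > 0, ∀ i ∈ s, δ < g i := by
  have hsmall : ∀ᶠ δ in 𝓝[>] (0 : ℝ), 0 < δ ∧ ∀ i ∈ s, δ < g i :=
    Eventually.and self_mem_nhdsWithin <| nhdsWithin_le_nhds <|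
      (eventually_all_finset s).2 fun i hi => eventually_lt_nhds (hg i hi)
  exact hsmall.exists

theorem sum_smul_mem_stdSimplex {ι W : Type*} [Fintype ι] [Fintype W] {w : ι → ℝ}
    (hw : w ∈ stdSimplex ℝ ι) {P : ι → W → ℝ} (hP : ∀ i, P i ∈ stdSimplex ℝ W) :
    ∑ i, w i • P i ∈ stdSimplex ℝ W :=
  (convex_stdSimplex ℝ W).sum_mem (fun i _ => hw.1 i) hw.2 fun i _ => hP i

section Divergence

variable {W : Type*} [Fintype W] {D : (W → ℝ) → (W → ℝ) → ℝ}

theorem IsDivergence.exists_pos_forall_le_imp_abs_sub_lt (hD : IsDivergence D)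
    {f : (W → ℝ) → ℝ} (hf : Continuous f) {δ : ℝ} (hδ : 0 < δ) :
    ∃ ε > 0, ∀ a ∈ stdSimplex ℝ W, ∀ b ∈ stdSimplex ℝ W, D a b ≤ ε → |f a - f b| < δ := by
  obtain ⟨hcont, hnonneg, heq_zero⟩ := hD
  set K := (stdSimplex ℝ W ×ˢ stdSimplex ℝ W) ∩ {ab | δ ≤ |f ab.1 - f ab.2|}
  have hK : IsCompact K :=
    ((isCompact_stdSimplex ℝ W).prod (isCompact_stdSimplex ℝ W)).inter_right <|
      isClosed_le continuous_const <| by fun_prop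
  have hpos : ∀ ab ∈ K, 0 < D ab.1 ab.2 := by
    rintro ⟨a, b⟩ ⟨⟨ha, hb⟩, hfar⟩
    refine (hnonneg a ha b hb).lt_of_ne fun h => ?_
    have hab : a = b := (heq_zero a ha b hb).1 h.symm
    simp only [Set.mem_ofPred_eq, hab, sub_self, abs_zero] at hfar
    linarith
  obtain ⟨ε, hε, hεK⟩ := hK.exists_forall_le' (hcont.mono Set.inter_subset_left) hpos
  refine ⟨ε / 2, half_pos hε, fun a ha b hb hDab => ?_⟩
  by_contra hfar
  have := hεK (a, b) ⟨⟨ha, hb⟩, not_lt.1 hfar⟩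
  linarith

theorem JointlyConvexDiv.convexOn (hD : JointlyConvexDiv D) :
    ConvexOn ℝ (stdSimplex ℝ W ×ˢ stdSimplex ℝ W) fun pq => D pq.1 pq.2 := by
  refine ⟨(convex_stdSimplex ℝ W).prod (convex_stdSimplex ℝ W), ?_⟩
  rintro ⟨p₁, q₁⟩ ⟨hp₁, hq₁⟩ ⟨p₂, q₂⟩ ⟨hp₂, hq₂⟩ s t hs ht hst
  obtain rfl : t = 1 - s := by linarith
  exact hD p₁ hp₁ p₂ hp₂ q₁ hq₁ q₂ hq₂ s ⟨hs, by linarith⟩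

theorem JointlyConvexDiv.map_sum_le (hD : JointlyConvexDiv D) {ι : Type*} [Fintype ι]
    {w : ι → ℝ} (hw : w ∈ stdSimplex ℝ ι) {P Q : ι → W → ℝ}
    (hP : ∀ i, P i ∈ stdSimplex ℝ W) (hQ : ∀ i, Q i ∈ stdSimplex ℝ W) :
    D (∑ i, w i • P i) (∑ i, w i • Q i) ≤ ∑ i, w i * D (P i) (Q i) := by
  have := hD.convexOn.map_sum_le (t := Finset.univ) (p := fun i => (P i, Q i))
    (fun i _ => hw.1 i) hw.2 fun i _ => ⟨hP i, hQ i⟩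
  simpa only [Prod.fst_sum, Prod.snd_sum, Prod.smul_fst, Prod.smul_snd, smul_eq_mul] using this

end Divergence

theorem multiple_evidence_embed_calibration_science_general
    {V₁ V₂ : Type*} [Fintype V₁] [Fintype V₂]
    (vstar : V₁) (N : ℕ)
    (D : (V₁ → ℝ) → (V₁ → ℝ) → ℝ) (hD : IsDivergence D) (hDconv : JointlyConvexDiv D)
    (Ψ : V₂ → V₁ → ℝ) (hΨ : ∀ v, Ψ v ∈ stdSimplex ℝ V₁)
    (p : ℕ → V₂ → ℝ) (hp : ∀ i ≤ N, p i ∈ stdSimplex ℝ V₂)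
    (F : ℕ → V₁ → ℝ) (hFdef : ∀ i, F i = ∑ v : V₂, p i v • Ψ v)
    (hmono : ∀ i, 1 ≤ i → i ≤ N → F (i - 1) vstar < F i vstar) :
    ∃ ε₀ : ℝ, 0 < ε₀ ∧
      ∀ R : ℕ → V₂ → V₁ → ℝ, (∀ i ≤ N, ∀ v : V₂, R i v ∈ stdSimplex ℝ V₁) →
        (∀ i ≤ N, ∑ v : V₂, p i v * D (Ψ v) (R i v) ≤ ε₀) →
        ∀ i, 1 ≤ i → i ≤ N →
          (∑ v : V₂, p (i - 1) v • R (i - 1) v) vstar <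
            (∑ v : V₂, p i v • R i v) vstar := by
  obtain ⟨δ, hδ, hgap⟩ := (Finset.Icc 1 N).exists_pos_forall_lt
    (g := fun i => F i vstar - F (i - 1) vstar) fun i hi =>
      sub_pos.2 (hmono i (Finset.mem_Icc.1 hi).1 (Finset.mem_Icc.1 hi).2)
  obtain ⟨ε₀, hε₀, hclose⟩ :=
    hD.exists_pos_forall_le_imp_abs_sub_lt (continuous_apply vstar) (half_pos hδ)
  refine ⟨ε₀, hε₀, fun R hR hcal i hi hiN => ?_⟩
  have hnear : ∀ j ≤ N, |F j vstar - (∑ v, p j v • R j v) vstar| < δ / 2 := fun j hj => by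
    rw [hFdef]
    exact hclose _ (sum_smul_mem_stdSimplex (hp j hj) hΨ)
      _ (sum_smul_mem_stdSimplex (hp j hj) (hR j hj))
      ((hDconv.map_sum_le (hp j hj) hΨ (hR j hj)).trans (hcal j hj))
  have hgap_i := hgap i (Finset.mem_Icc.2 ⟨hi, hiN⟩)
  have hnear_i := abs_lt.1 (hnear i hiN)
  have hnear_pred := abs_lt.1 (hnear (i - 1) (by omega))
  linarith [hnear_i.1, hnear_pred.2]

/-- **Multiple lines of evidence transfer through embed-calibration (science).**
If the embedded prediction distributions `F i = ∑ v, p i v • Ψ v` assign strictly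
increasing probability to `vstar`, then there is `ε₀ > 0` such that for any family
`R i v` of universe response distributions satisfying the embed-calibration bound
`∑ v, p i v * D (Ψ v) (R i v) ≤ ε₀`, the mixtures `G i = ∑ v, p i v • R i v`
also assign strictly increasing probability to `vstar`. -/
theorem multiple_evidence_embed_calibration_science
    {V₁ V₂ : Type*} [Fintype V₁] [Nonempty V₁] [Fintype V₂] [Nonempty V₂]
    (vstar : V₁) (N : ℕ) (hN : 1 ≤ N)
    (D : (V₁ → ℝ) → (V₁ → ℝ) → ℝ) (hD : IsDivergence D) (hDconv : JointlyConvexDiv D)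
    (Ψ : V₂ → V₁ → ℝ) (hΨ : ∀ v, Ψ v ∈ stdSimplex ℝ V₁)
    (p : ℕ → V₂ → ℝ) (hp : ∀ i ≤ N, p i ∈ stdSimplex ℝ V₂)
    (F : ℕ → V₁ → ℝ) (hFdef : ∀ i, F i = ∑ v : V₂, p i v • Ψ v)
    (hmono : ∀ i, 1 ≤ i → i ≤ N → F (i - 1) vstar < F i vstar) :
    ∃ ε₀ : ℝ, 0 < ε₀ ∧
      ∀ R : ℕ → V₂ → V₁ → ℝ, (∀ i ≤ N, ∀ v : V₂, R i v ∈ stdSimplex ℝ V₁) →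
        (∀ i ≤ N, ∑ v : V₂, p i v * D (Ψ v) (R i v) ≤ ε₀) →
        ∀ i, 1 ≤ i → i ≤ N →
          (∑ v : V₂, p (i - 1) v • R (i - 1) v) vstar <
            (∑ v : V₂, p i v • R i v) vstar :=
  multiple_evidence_embed_calibration_science_general vstar N D hD hDconv Ψ hΨ p hp F hFdef hmono
end

section
/- Let V be a nonempty finite type, v*, v† ∈ V, and α > 1 a real number. Let D₁ be a divergence on S(V) and D₂ a divergence on S(V × V). Fix F_J ∈ S(V × V) and F₁, F₂ ∈ S(V) with F₁(v*) > 0, F₂(v†) > 0, and the abductive factorization F_J(v*, v†) = α · F₁(v*) · F₂(v†). Then there exists ε₀ > 0 such that for all J ∈ S(V × V) and M₁, M₂ ∈ S(V) satisfying D₂ F_J J ≤ ε₀, D₁ F₁ M₁ ≤ ε₀, D₁ F₂ M₂ ≤ ε₀, M₁(v*) > 0, and the marginal condition ∑ u ∈ V, J(v*, u) = M₁(v*), one has J(v*, v†)/M₁(v*) > M₂(v†). -/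
/-!
Since `α > 1`, the strict inequality `F₂ v† · F₁ v* < F_J (v*, v†)` holds at the predicted
distributions, hence on a neighbourhood of them. By compactness of the simplex, a divergence
that vanishes only on the diagonal confines a small enough divergence ball to any neighbourhood.
-/

open scoped BigOperators

open Filter Topology

namespace IsDivergence

variable {W : Type*} [Fintype W] {D : (W → ℝ) → (W → ℝ) → ℝ} {p : W → ℝ}

theorem continuousOn_right (hD : IsDivergence D) (hp : p ∈ stdSimplex ℝ W) :
    ContinuousOn (D p) (stdSimplex ℝ W) :=
  hD.1.comp (continuous_const.prodMk continuous_id).continuousOn fun _ hq => ⟨hp, hq⟩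

theorem pos_of_ne (hD : IsDivergence D) (hp : p ∈ stdSimplex ℝ W) {q : W → ℝ}
    (hq : q ∈ stdSimplex ℝ W) (hpq : p ≠ q) : 0 < D p q :=
  (hD.2.1 p hp q hq).lt_of_ne' fun h => hpq ((hD.2.2 p hp q hq).1 h)

theorem exists_pos_forall_of_eventually (hD : IsDivergence D) (hp : p ∈ stdSimplex ℝ W)
    {P : (W → ℝ) → Prop} (hP : ∀ᶠ q in 𝓝 p, P q) :
    ∃ ε > 0, ∀ q ∈ stdSimplex ℝ W, D p q ≤ ε → P q := by
  obtain ⟨t, htP, ht, hpt⟩ := eventually_nhds_iff.1 hP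
  obtain ⟨δ, hδ, hδle⟩ := ((isCompact_stdSimplex ℝ W).diff ht).exists_forall_le'
    ((hD.continuousOn_right hp).mono Set.sdiff_subset)
    fun q hq => hD.pos_of_ne hp hq.1 fun h => hq.2 (h ▸ hpt)
  refine ⟨δ / 2, half_pos hδ, fun q hq hDq => htP q ?_⟩
  by_contra hqt
  linarith [hδle q ⟨hq, hqt⟩]

end IsDivergence

theorem abduction_math_general
    {V : Type*} [Fintype V]
    (vstar vdag : V) (α : ℝ) (hα : 1 < α)
    (D₁ : (V → ℝ) → (V → ℝ) → ℝ) (hD₁ : IsDivergence D₁)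
    (D₂ : (V × V → ℝ) → (V × V → ℝ) → ℝ) (hD₂ : IsDivergence D₂)
    (FJ : V × V → ℝ) (hFJ : FJ ∈ stdSimplex ℝ (V × V))
    (F₁ F₂ : V → ℝ) (hF₁ : F₁ ∈ stdSimplex ℝ V) (hF₂ : F₂ ∈ stdSimplex ℝ V)
    (hF₁pos : 0 < F₁ vstar) (hF₂pos : 0 < F₂ vdag)
    (hfact : FJ (vstar, vdag) = α * F₁ vstar * F₂ vdag) :
    ∃ ε₀ : ℝ, 0 < ε₀ ∧
      ∀ J ∈ stdSimplex ℝ (V × V), ∀ M₁ ∈ stdSimplex ℝ V, ∀ M₂ ∈ stdSimplex ℝ V,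
        D₂ FJ J ≤ ε₀ → D₁ F₁ M₁ ≤ ε₀ → D₁ F₂ M₂ ≤ ε₀ →
        0 < M₁ vstar → (∑ u : V, J (vstar, u)) = M₁ vstar →
        M₂ vdag < J (vstar, vdag) / M₁ vstar := by
  have hnear : ∀ᶠ x in 𝓝 FJ ×ˢ (𝓝 F₁ ×ˢ 𝓝 F₂),
      x.2.2 vdag * x.2.1 vstar < x.1 (vstar, vdag) := by
    rw [← nhds_prod_eq, ← nhds_prod_eq]
    refine ContinuousAt.eventually_lt (by fun_prop) (by fun_prop) ?_
    show F₂ vdag * F₁ vstar < FJ (vstar, vdag)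
    rw [hfact]
    nlinarith [mul_pos hF₁pos hF₂pos]
  obtain ⟨PJ, hPJ, P₁₂, hP₁₂, hJ₁₂⟩ := eventually_prod_iff.1 hnear
  obtain ⟨P₁, hP₁, P₂, hP₂, h₁₂⟩ := eventually_prod_iff.1 hP₁₂
  obtain ⟨εJ, hεJ, hJ⟩ := hD₂.exists_pos_forall_of_eventually hFJ hPJ
  obtain ⟨ε₁, hε₁, h₁⟩ := hD₁.exists_pos_forall_of_eventually hF₁ hP₁
  obtain ⟨ε₂, hε₂, h₂⟩ := hD₁.exists_pos_forall_of_eventually hF₂ hP₂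
  refine ⟨min εJ (min ε₁ ε₂), lt_min hεJ (lt_min hε₁ hε₂), ?_⟩
  intro J hJS M₁ hM₁S M₂ hM₂S hDJ hD₁M hD₂M hM₁pos _
  rw [lt_div_iff₀ hM₁pos]
  exact hJ₁₂ (hJ J hJS (hDJ.trans (min_le_left _ _)))
    (h₁₂ (h₁ M₁ hM₁S (hD₁M.trans ((min_le_right _ _).trans (min_le_left _ _))))
      (h₂ M₂ hM₂S (hD₂M.trans ((min_le_right _ _).trans (min_le_right _ _)))))

/-- **Abduction proposition for mathematics.**
If the mathematician's prediction distributions satisfy the abductive factorization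
`F_J(v*, v†) = α · F₁(v*) · F₂(v†)` with `α > 1`, then there is `ε₀ > 0` such that
any oracle distributions `J, M₁, M₂` within divergence `ε₀` of `F_J, F₁, F₂` and
satisfying the marginal condition obey the abduction implication:
`J(v*, v†)/M₁(v*) > M₂(v†)`. -/
theorem abduction_math
    {V : Type*} [Fintype V] [Nonempty V]
    (vstar vdag : V) (α : ℝ) (hα : 1 < α)
    (D₁ : (V → ℝ) → (V → ℝ) → ℝ) (hD₁ : IsDivergence D₁)
    (D₂ : (V × V → ℝ) → (V × V → ℝ) → ℝ) (hD₂ : IsDivergence D₂)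
    (FJ : V × V → ℝ) (hFJ : FJ ∈ stdSimplex ℝ (V × V))
    (F₁ F₂ : V → ℝ) (hF₁ : F₁ ∈ stdSimplex ℝ V) (hF₂ : F₂ ∈ stdSimplex ℝ V)
    (hF₁pos : 0 < F₁ vstar) (hF₂pos : 0 < F₂ vdag)
    (hfact : FJ (vstar, vdag) = α * F₁ vstar * F₂ vdag) :
    ∃ ε₀ : ℝ, 0 < ε₀ ∧
      ∀ J ∈ stdSimplex ℝ (V × V), ∀ M₁ ∈ stdSimplex ℝ V, ∀ M₂ ∈ stdSimplex ℝ V,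
        D₂ FJ J ≤ ε₀ → D₁ F₁ M₁ ≤ ε₀ → D₁ F₂ M₂ ≤ ε₀ →
        0 < M₁ vstar → (∑ u : V, J (vstar, u)) = M₁ vstar →
        M₂ vdag < J (vstar, vdag) / M₁ vstar :=
  abduction_math_general vstar vdag α hα D₁ hD₁ D₂ hD₂ FJ hFJ F₁ F₂ hF₁ hF₂ hF₁pos hF₂pos hfact
end
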